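/- The star Menger property is inherited by open F_σ subsets: if X is star Menger and G ⊆ X is open and a countable union of closed sets, then G (with the subspace topology) is star Menger. In particular, clopen subsets of star Menger spaces are star Menger. -/
import Mathlib


open Set

/-- The star of a set `A` with respect to a family `𝒰`: the union of all members of `𝒰`
meeting `A`. -/
def star' {X : Type*} (A : Set X) (𝒰 : Set (Set X)) : Set X :=
  ⋃₀ {u ∈ 𝒰 | (u ∩ A).Nonempty}

/-- A subset `M` of a space is Menger (as a subspace), expressed relatively: for every
sequence of covers of `M` by open subsets of `X` there are finite subfamilies whose
union covers `M`. -/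
def MengerSet {X : Type*} [TopologicalSpace X] (M : Set X) : Prop :=
  ∀ 𝒰 : ℕ → Set (Set X), (∀ n, ∀ u ∈ 𝒰 n, IsOpen u) → (∀ n, M ⊆ ⋃₀ 𝒰 n) →
    ∃ 𝒱 : ℕ → Set (Set X), (∀ n, 𝒱 n ⊆ 𝒰 n ∧ (𝒱 n).Finite) ∧ M ⊆ ⋃ n, ⋃₀ 𝒱 n

/-- A space `X` is Menger. -/
def MengerSpace (X : Type*) [TopologicalSpace X] : Prop :=
  ∀ 𝒰 : ℕ → Set (Set X), (∀ n, (∀ u ∈ 𝒰 n, IsOpen u) ∧ ⋃₀ 𝒰 n = univ) →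
    ∃ 𝒱 : ℕ → Set (Set X), (∀ n, 𝒱 n ⊆ 𝒰 n ∧ (𝒱 n).Finite) ∧ ⋃ n, ⋃₀ 𝒱 n = univ

/-- A space `X` is star Menger: every open cover has a Menger star kernel. -/
def StarMenger (X : Type*) [TopologicalSpace X] : Prop :=
  ∀ 𝒰 : Set (Set X), (∀ u ∈ 𝒰, IsOpen u) → ⋃₀ 𝒰 = univ →
    ∃ M : Set X, MengerSet M ∧ star' M 𝒰 = univ

/-- `G ⊆ X` (as a subspace) is star Menger, expressed relatively for open `G`. -/
def StarMengerSet {X : Type*} [TopologicalSpace X] (G : Set X) : Prop :=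
  ∀ 𝒰 : Set (Set X), (∀ u ∈ 𝒰, IsOpen u) → G ⊆ ⋃₀ 𝒰 →
    ∃ M : Set X, M ⊆ G ∧ MengerSet M ∧ G ⊆ star' M 𝒰

lemma mengerSet_inter_closed {X : Type*} [TopologicalSpace X] {M C : Set X}
    (hM : MengerSet M) (hC : IsClosed C) : MengerSet (M ∩ C) := by
  intro 𝒰 hop hcov
  have hop' : ∀ n, ∀ u ∈ 𝒰 n ∪ {Cᶜ}, IsOpen u := by
    intro n u hu
    rcases hu with hu | hu
    · exact hop n u hu
    · rw [mem_singleton_iff] at hu; subst hu; exact hC.isOpen_compl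
  have hcov' : ∀ n, M ⊆ ⋃₀ (𝒰 n ∪ {Cᶜ}) := by
    intro n x hx
    by_cases hxC : x ∈ C
    · obtain ⟨u, hu, hxu⟩ := hcov n ⟨hx, hxC⟩
      exact ⟨u, Or.inl hu, hxu⟩
    · exact ⟨Cᶜ, Or.inr rfl, hxC⟩
  obtain ⟨𝒱, h𝒱, hMcov⟩ := hM _ hop' hcov'
  refine ⟨fun n => 𝒱 n \ {Cᶜ}, fun n => ⟨?_, (h𝒱 n).2.subset diff_subset⟩, ?_⟩
  · intro v hv
    rcases (h𝒱 n).1 hv.1 with h | h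
    · exact h
    · exact absurd h hv.2
  · rintro x ⟨hxM, hxC⟩
    obtain ⟨_, ⟨n, rfl⟩, v, hv, hxv⟩ := hMcov hxM
    refine mem_iUnion.2 ⟨n, v, ⟨hv, ?_⟩, hxv⟩
    intro h
    rw [mem_singleton_iff] at h; subst h; exact hxv hxC

lemma mengerSet_iUnion {X : Type*} [TopologicalSpace X] {M : ℕ → Set X}
    (h : ∀ n, MengerSet (M n)) : MengerSet (⋃ n, M n) := by
  intro 𝒰 hop hcov
  set e : ℕ × ℕ ≃ ℕ := Denumerable.eqv (ℕ × ℕ) with he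
  have key : ∀ m, ∃ W : ℕ → Set (Set X),
      (∀ k, W k ⊆ 𝒰 (e (m, k)) ∧ (W k).Finite) ∧ M m ⊆ ⋃ k, ⋃₀ W k := by
    intro m
    exact h m (fun k => 𝒰 (e (m, k))) (fun k => hop _) (fun k x hx => hcov _ (mem_iUnion.2 ⟨m, hx⟩))
  choose W hW hWcov using key
  refine ⟨fun n => W (e.symm n).1 (e.symm n).2, fun n => ?_, ?_⟩
  · have := hW (e.symm n).1 (e.symm n).2
    rwa [Prod.mk.eta, Equiv.apply_symm_apply] at this
  · intro x hx
    obtain ⟨m, hxm⟩ := mem_iUnion.1 hx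
    obtain ⟨_, ⟨k, rfl⟩, hxW⟩ := hWcov m hxm
    refine mem_iUnion.2 ⟨e (m, k), ?_⟩
    simp only [Equiv.symm_apply_apply]
    exact hxW

/-- The star Menger property is inherited by open `F_σ` subsets. -/
theorem stmt12 {X : Type*} [TopologicalSpace X] (hX : StarMenger X)
    (G : Set X) (hG : IsOpen G) (F : ℕ → Set X) (hF : ∀ n, IsClosed (F n))
    (hGF : G = ⋃ n, F n) :
    StarMengerSet G := by
  intro 𝒰 h𝒰op h𝒰cov
  set e : ℕ × ℕ ≃ ℕ := Denumerable.eqv (ℕ × ℕ) with he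
  have key : ∀ n, ∃ K : Set X, MengerSet K ∧ star' K ((fun v => v ∩ G) '' 𝒰 ∪ {(F n)ᶜ}) = univ := by
    intro n
    apply hX
    · intro u hu
      rcases hu with ⟨v, hv, rfl⟩ | hu
      · exact (h𝒰op v hv).inter hG
      · rw [mem_singleton_iff] at hu; subst hu; exact (hF n).isOpen_compl
    · apply eq_univ_of_forall
      intro x
      by_cases hx : x ∈ F n
      · have hxG : x ∈ G := hGF ▸ mem_iUnion.2 ⟨n, hx⟩
        obtain ⟨v, hv, hxv⟩ := h𝒰cov hxG
        exact ⟨v ∩ G, Or.inl ⟨v, hv, rfl⟩, hxv, hxG⟩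
      · exact ⟨(F n)ᶜ, Or.inr rfl, hx⟩
  choose K hKM hKstar using key
  refine ⟨⋃ n, K (e.symm n).1 ∩ F (e.symm n).2, ?_, ?_, ?_⟩
  · apply iUnion_subset
    intro n
    exact (inter_subset_right).trans (hGF ▸ subset_iUnion F (e.symm n).2)
  · exact mengerSet_iUnion fun n => mengerSet_inter_closed (hKM _) (hF _)
  · intro x hxG
    obtain ⟨n, hxn⟩ := mem_iUnion.1 (hGF ▸ hxG)
    have := (hKstar n).symm ▸ mem_univ x
    obtain ⟨u, ⟨hu, y, hyu, hyK⟩, hxu⟩ : x ∈ star' (K n) ((fun v => v ∩ G) '' 𝒰 ∪ {(F n)ᶜ}) := by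
      rw [hKstar n]; trivial
    rcases hu with ⟨v, hv, rfl⟩ | hu
    · -- u = v ∩ G, y ∈ v ∩ G and y ∈ K n
      obtain ⟨m, hym⟩ := mem_iUnion.1 (hGF ▸ hyu.2)
      refine ⟨v, ⟨hv, y, hyu.1, mem_iUnion.2 ⟨e (n, m), ?_⟩⟩, hxu.1⟩
      simp only [Equiv.symm_apply_apply]
      exact ⟨hyK, hym⟩
    · rw [mem_singleton_iff] at hu; subst hu; exact absurd hxn hxu
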